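/- arXiv:1701.04890 — 3 statements merged into one kernel-verified Lean document; each statement's English description precedes it below -/
import Mathlib

section
/- Let X : Polynomial ℂ with X.coeff 0 ≠ 0 and natDegree X = L. Suppose X = G * R where G is self-reciprocal with respect to D := natDegree G and G is a greatest common divisor of X and X⋆[L] (i.e., every common divisor of X and X⋆[L] divides G). Then for every H : Polynomial ℂ with natDegree H ≤ L, the equation X * H⋆[L] + X⋆[L] * H = 0 holds if and only if there exists S : Polynomial ℂ with natDegree S ≤ D and S⋆[D] = S such that H = (Complex.I) • (R * S). -/
/-- The conjugate-reciprocal of `P` with respect to `N`. -/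
noncomputable def creflect (N : ℕ) (P : Polynomial ℂ) : Polynomial ℂ :=
  Polynomial.reflect N (P.map (starRingEnd ℂ))

open Polynomial in
lemma creflect_natDegree_le {N : ℕ} {P : Polynomial ℂ} (h : P.natDegree ≤ N) :
    (creflect N P).natDegree ≤ N := by
  refine natDegree_le_iff_coeff_eq_zero.mpr fun i hi => ?_
  rw [creflect, coeff_reflect, revAt_eq_self_of_lt hi, coeff_map]
  rw [coeff_eq_zero_of_natDegree_lt (by omega : P.natDegree < i)]
  simp

open Polynomial in
lemma creflect_mul {m n : ℕ} {P Q : Polynomial ℂ}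
    (hP : P.natDegree ≤ m) (hQ : Q.natDegree ≤ n) :
    creflect (m + n) (P * Q) = creflect m P * creflect n Q := by
  rw [creflect, Polynomial.map_mul]
  exact reflect_mul _ _ (natDegree_map_le.trans hP) (natDegree_map_le.trans hQ)

open Polynomial in
lemma creflect_smul (N : ℕ) (c : ℂ) (P : Polynomial ℂ) :
    creflect N (c • P) = (starRingEnd ℂ c) • creflect N P := by
  rw [smul_eq_C_mul, smul_eq_C_mul, creflect, creflect, Polynomial.map_mul, map_C,
    reflect_C_mul]

open Polynomial in
lemma creflect_coeff_top (N : ℕ) (P : Polynomial ℂ) :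
    (creflect N P).coeff N = starRingEnd ℂ (P.coeff 0) := by
  rw [creflect, coeff_reflect, revAt_le le_rfl, Nat.sub_self, coeff_map]

/-- Solutions `H` of `X H⋆ + X⋆ H = 0` are exactly `i R S` for self-reciprocal `S`,
where `X = G R` with `G` the greatest self-reciprocal divisor of `X`. -/
theorem antiSelfReciprocal_solutions (X G R : Polynomial ℂ) (L D : ℕ)
    (h0 : X.coeff 0 ≠ 0) (hL : X.natDegree = L) (hD : D = G.natDegree)
    (hXGR : X = G * R)
    (hGsr : creflect D G = G)
    (hGdvdX : G ∣ X) (hGdvdXstar : G ∣ creflect L X)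
    (hGCD : ∀ C : Polynomial ℂ, C ∣ X → C ∣ creflect L X → C ∣ G) :
    ∀ H : Polynomial ℂ, H.natDegree ≤ L →
      (X * creflect L H + creflect L X * H = 0 ↔
        ∃ S : Polynomial ℂ, S.natDegree ≤ D ∧ creflect D S = S ∧
          H = Complex.I • (R * S)) := by
  classical
  have hX0 : X ≠ 0 := fun h => h0 (by simp [h])
  have hG0 : G ≠ 0 := fun h => hX0 (by simp [hXGR, h])
  have hR0 : R ≠ 0 := fun h => hX0 (by simp [hXGR, h])
  set E := R.natDegree with hE
  have hDE : D + E = L := by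
    rw [← hL, hXGR, Polynomial.natDegree_mul hG0 hR0, hD]
  -- X⋆ = G * R⋆
  have hXstar : creflect L X = G * creflect E R := by
    rw [hXGR, ← hDE, creflect_mul (le_of_eq hD.symm) le_rfl, hGsr]
  have hXstar0 : creflect L X ≠ 0 := by
    intro h
    have := creflect_coeff_top L X
    rw [h] at this
    simp only [Polynomial.coeff_zero] at this
    exact h0 (by simpa using this.symm)
  have hRstar0 : creflect E R ≠ 0 := by
    intro h; exact hXstar0 (by rw [hXstar, h, mul_zero])
  -- coprimality of R and R⋆
  have hcop : IsCoprime R (creflect E R) := by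
    rw [← EuclideanDomain.gcd_isUnit_iff]
    set g := EuclideanDomain.gcd R (creflect E R) with hg
    have hgR : g ∣ R := EuclideanDomain.gcd_dvd_left _ _
    have hgRs : g ∣ creflect E R := EuclideanDomain.gcd_dvd_right _ _
    have h1 : G * g ∣ X := by rw [hXGR]; exact mul_dvd_mul_left G hgR
    have h2 : G * g ∣ creflect L X := by rw [hXstar]; exact mul_dvd_mul_left G hgRs
    have h3 : G * g ∣ G * 1 := by rw [mul_one]; exact hGCD _ h1 h2
    exact isUnit_of_dvd_one ((mul_dvd_mul_iff_left hG0).mp h3)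
  intro H hHL
  constructor
  · intro heq
    by_cases hH0 : H = 0
    · exact ⟨0, by simp, by simp [creflect, Polynomial.reflect_zero], by simp [hH0]⟩
    -- cancel G
    have heq' : R * creflect L H = -(creflect E R * H) := by
      have hsum : G * (R * creflect L H + creflect E R * H) = 0 := by
        rw [mul_add, ← mul_assoc, ← hXGR, ← mul_assoc, ← hXstar, heq]
      have h := (mul_eq_zero.mp hsum).resolve_left hG0
      linear_combination h
    have hdvd : R ∣ creflect E R * H := ⟨-(creflect L H), by linear_combination heq'⟩
    obtain ⟨T, hT⟩ := hcop.dvd_of_dvd_mul_left hdvd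
    have hT0 : T ≠ 0 := fun h => hH0 (by simp [hT, h])
    have hTD : T.natDegree ≤ D := by
      rw [hT, Polynomial.natDegree_mul hR0 hT0] at hHL
      omega
    have hHstar : creflect L H = creflect E R * creflect D T := by
      rw [hT, ← hDE, add_comm D E, creflect_mul le_rfl hTD]
    have hkey : R * creflect E R * (creflect D T + T) = 0 := by
      rw [hHstar, hT] at heq'
      linear_combination heq'
    have hTT : creflect D T = -T := by
      rcases mul_eq_zero.mp hkey with h | h
      · exact absurd h (mul_ne_zero hR0 hRstar0)
      · linear_combination h
    refine ⟨(-Complex.I) • T, (Polynomial.natDegree_smul_le _ _).trans hTD, ?_, ?_⟩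
    · rw [creflect_smul, hTT, map_neg, Complex.conj_I, neg_neg]
      simp [smul_neg, neg_smul]
    · rw [hT]
      rw [mul_smul_comm, smul_smul]
      simp [Complex.I_mul_I]
  · rintro ⟨S, hSD, hSsr, rfl⟩
    have hHs : creflect L (Complex.I • (R * S)) =
        (starRingEnd ℂ Complex.I) • (creflect E R * creflect D S) := by
      rw [creflect_smul, ← hDE, add_comm D E, creflect_mul le_rfl hSD]
    rw [hHs, hSsr, hXstar, hXGR]
    simp only [Complex.conj_I, Polynomial.smul_eq_C_mul, Polynomial.C_neg, map_neg]
    ring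
end

section
/- Let X₁, X₂ : Polynomial ℂ with X₁.coeff 0 ≠ 0, X₂.coeff 0 ≠ 0, natDegree X₁ = d₁, natDegree X₂ = d₂, and IsCoprime X₁ X₂. Suppose H₁, H₂ : Polynomial ℂ satisfy natDegree H₁ ≤ d₁, natDegree H₂ ≤ d₂, and the three equations X₁ * H₁⋆[d₁] + X₁⋆[d₁] * H₁ = 0, X₂ * H₂⋆[d₂] + X₂⋆[d₂] * H₂ = 0, and X₁ * H₂⋆[d₂] + X₂⋆[d₂] * H₁ = 0. Then there exists a real number c such that H₁ = (Complex.I * c) • X₁ and H₂ = (Complex.I * c) • X₂. -/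
/-!
Eliminating `H₂⋆` between the second and third equations gives `X₂⋆ (X₂ H₁ - X₁ H₂) = 0`, hence
`X₂ H₁ = X₁ H₂`. By coprimality `X₁ ∣ H₁`, and the degree bound makes the quotient a constant `a`,
so `H₁ = a X₁` and `H₂ = a X₂`. The first equation then reads `(conj a + a) X₁ X₁⋆ = 0`, so `a` is
purely imaginary.
-/

open Polynomial ComplexConjugate

theorem Polynomial.exists_eq_C_mul_of_dvd_of_natDegree_le {R : Type*} [CommSemiring R]
    [NoZeroDivisors R] {p q : R[X]} (hp : p ≠ 0) (hpq : p ∣ q)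
    (hdeg : q.natDegree ≤ p.natDegree) : ∃ a : R, q = C a * p := by
  obtain ⟨r, rfl⟩ := hpq
  rcases eq_or_ne r 0 with rfl | hr
  · exact ⟨0, by simp⟩
  rw [natDegree_mul hp hr] at hdeg
  refine ⟨r.coeff 0, ?_⟩
  rw [← eq_C_of_natDegree_eq_zero (by omega), mul_comm]

theorem Complex.eq_I_mul_im_of_conj_add_self_eq_zero {a : ℂ} (h : conj a + a = 0) :
    a = Complex.I * a.im := by
  have hre : a.re = 0 := by
    have := congrArg Complex.re h
    simp only [Complex.add_re, Complex.conj_re, Complex.zero_re] at this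
    linarith
  apply Complex.ext <;> simp [hre]

theorem creflect_ne_zero {N : ℕ} {P : ℂ[X]} (hP : P ≠ 0) : creflect N P ≠ 0 := by
  simpa [creflect, reflect_eq_zero_iff] using hP

theorem creflect_C_mul (N : ℕ) (a : ℂ) (P : ℂ[X]) :
    creflect N (C a * P) = C (conj a) * creflect N P := by
  simp [creflect, Polynomial.map_mul, reflect_C_mul]

theorem mul_eq_mul_of_creflect_relations {N : ℕ} {X₁ X₂ H₁ H₂ : ℂ[X]} (hX₂ : X₂ ≠ 0)
    (heq₂ : X₂ * creflect N H₂ + creflect N X₂ * H₂ = 0)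
    (heq₃ : X₁ * creflect N H₂ + creflect N X₂ * H₁ = 0) :
    X₂ * H₁ = X₁ * H₂ := by
  have hkey : creflect N X₂ * (X₂ * H₁ - X₁ * H₂) = 0 := by
    linear_combination X₂ * heq₃ - X₁ * heq₂
  exact sub_eq_zero.mp ((mul_eq_zero.mp hkey).resolve_left (creflect_ne_zero hX₂))

theorem conj_add_self_eq_zero_of_creflect_relation {N : ℕ} {X : ℂ[X]} {a : ℂ} (hX : X ≠ 0)
    (heq : X * creflect N (C a * X) + creflect N X * (C a * X) = 0) :
    conj a + a = 0 := by
  rw [creflect_C_mul] at heq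
  have hfac : C (conj a + a) * (X * creflect N X) = 0 := by
    rw [C_add]
    linear_combination heq
  simpa only [mul_eq_zero, C_eq_zero, hX, creflect_ne_zero hX, or_false] using hfac

theorem tangent_space_uniqueness_general (X₁ X₂ : Polynomial ℂ) (d₁ d₂ : ℕ)
    (h₁ : X₁.coeff 0 ≠ 0) (h₂ : X₂.coeff 0 ≠ 0)
    (hd₁ : X₁.natDegree = d₁)
    (hcop : IsCoprime X₁ X₂)
    (H₁ H₂ : Polynomial ℂ)
    (hH₁ : H₁.natDegree ≤ d₁)
    (heq₁ : X₁ * creflect d₁ H₁ + creflect d₁ X₁ * H₁ = 0)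
    (heq₂ : X₂ * creflect d₂ H₂ + creflect d₂ X₂ * H₂ = 0)
    (heq₃ : X₁ * creflect d₂ H₂ + creflect d₂ X₂ * H₁ = 0) :
    ∃ c : ℝ, H₁ = (Complex.I * (c : ℂ)) • X₁ ∧ H₂ = (Complex.I * (c : ℂ)) • X₂ := by
  have hX₁ : X₁ ≠ 0 := fun h => h₁ (by simp [h])
  have hX₂ : X₂ ≠ 0 := fun h => h₂ (by simp [h])
  have hcross := mul_eq_mul_of_creflect_relations hX₂ heq₂ heq₃
  have hdvd : X₁ ∣ H₁ := hcop.dvd_of_dvd_mul_left ⟨H₂, by rw [hcross]⟩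
  obtain ⟨a, rfl⟩ := exists_eq_C_mul_of_dvd_of_natDegree_le hX₁ hdvd (hd₁ ▸ hH₁)
  have hH₂ : H₂ = C a * X₂ := mul_left_cancel₀ hX₁ (by linear_combination -hcross)
  have ha := Complex.eq_I_mul_im_of_conj_add_self_eq_zero
    (conj_add_self_eq_zero_of_creflect_relation hX₁ heq₁)
  refine ⟨a.im, ?_, ?_⟩ <;> rw [smul_eq_C_mul, ← ha]
  exact hH₂

/-- The tangent-space uniqueness condition: for coprime `X₁, X₂` the only
solutions of the three correlation equations are `H₁ = i c X₁`, `H₂ = i c X₂`. -/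
theorem tangent_space_uniqueness (X₁ X₂ : Polynomial ℂ) (d₁ d₂ : ℕ)
    (h₁ : X₁.coeff 0 ≠ 0) (h₂ : X₂.coeff 0 ≠ 0)
    (hd₁ : X₁.natDegree = d₁) (hd₂ : X₂.natDegree = d₂)
    (hcop : IsCoprime X₁ X₂)
    (H₁ H₂ : Polynomial ℂ)
    (hH₁ : H₁.natDegree ≤ d₁) (hH₂ : H₂.natDegree ≤ d₂)
    (heq₁ : X₁ * creflect d₁ H₁ + creflect d₁ X₁ * H₁ = 0)
    (heq₂ : X₂ * creflect d₂ H₂ + creflect d₂ X₂ * H₂ = 0)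
    (heq₃ : X₁ * creflect d₂ H₂ + creflect d₂ X₂ * H₁ = 0) :
    ∃ c : ℝ, H₁ = (Complex.I * (c : ℂ)) • X₁ ∧ H₂ = (Complex.I * (c : ℂ)) • X₂ :=
  tangent_space_uniqueness_general X₁ X₂ d₁ d₂ h₁ h₂ hd₁ hcop H₁ H₂ hH₁ heq₁ heq₂ heq₃
end

section
/- Blind deconvolution with known autocorrelations: Let X₁, X̃₂ : Polynomial ℂ with X₁.coeff 0 ≠ 0, X̃₂.coeff 0 ≠ 0, natDegree X₁ = d₁, natDegree X̃₂ = d₂, and assume IsCoprime X₁ (X̃₂⋆[d₂]). Suppose Y₁, Ỹ₂ : Polynomial ℂ satisfy natDegree Y₁ ≤ d₁, natDegree Ỹ₂ ≤ d₂, the convolutions agree: Y₁ * Ỹ₂ = X₁ * X̃₂, and the autocorrelations agree: Y₁ * Y₁⋆[d₁] = X₁ * X₁⋆[d₁] and Ỹ₂ * Ỹ₂⋆[d₂] = X̃₂ * X̃₂⋆[d₂]. Then there exists c : ℂ with Complex.abs c = 1 such that Y₁ = c • X₁ and Ỹ₂ = (conj c) • X̃₂. -/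
lemma creflect_coeff_self (N : ℕ) (P : Polynomial ℂ) :
    (creflect N P).coeff N = (starRingEnd ℂ) (P.coeff 0) := by
  simp [creflect, Polynomial.coeff_reflect, Polynomial.revAt_le (le_refl N),
    Polynomial.coeff_map]

lemma creflect_ne_zero_s8 {N : ℕ} {P : Polynomial ℂ} (h : P.coeff 0 ≠ 0) :
    creflect N P ≠ 0 := by
  intro hz
  apply h
  have := creflect_coeff_self N P
  rw [hz] at this
  simpa using this.symm

lemma creflect_C_mul_s8 (N : ℕ) (c : ℂ) (P : Polynomial ℂ) :
    creflect N (Polynomial.C c * P) =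
      Polynomial.C ((starRingEnd ℂ) c) * creflect N P := by
  simp [creflect, Polynomial.map_mul, Polynomial.reflect_C_mul]

/-- Blind deconvolution with known autocorrelations: if the convolution and
the two autocorrelations agree, the signals match up to a global phase. -/
theorem blind_deconvolution_with_autocorrelations
    (X₁ Xt₂ Y₁ Yt₂ : Polynomial ℂ) (d₁ d₂ : ℕ)
    (h₁ : X₁.coeff 0 ≠ 0) (h₂ : Xt₂.coeff 0 ≠ 0)
    (hd₁ : X₁.natDegree = d₁) (hd₂ : Xt₂.natDegree = d₂)
    (hcop : IsCoprime X₁ (creflect d₂ Xt₂))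
    (hY₁ : Y₁.natDegree ≤ d₁) (hY₂ : Yt₂.natDegree ≤ d₂)
    (hconv : Y₁ * Yt₂ = X₁ * Xt₂)
    (ha₁ : Y₁ * creflect d₁ Y₁ = X₁ * creflect d₁ X₁)
    (ha₂ : Yt₂ * creflect d₂ Yt₂ = Xt₂ * creflect d₂ Xt₂) :
    ∃ c : ℂ, ‖c‖ = 1 ∧ Y₁ = c • X₁ ∧ Yt₂ = ((starRingEnd ℂ) c) • Xt₂ := by
  have hX₁ : X₁ ≠ 0 := fun h => h₁ (by simp [h])
  have hXt₂ : Xt₂ ≠ 0 := fun h => h₂ (by simp [h])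
  have hX₁s : creflect d₁ X₁ ≠ 0 := creflect_ne_zero_s8 h₁
  have hXt₂s : creflect d₂ Xt₂ ≠ 0 := creflect_ne_zero_s8 h₂
  have hY₁ne : Y₁ ≠ 0 := by
    intro h
    exact mul_ne_zero hX₁ hXt₂ (by rw [← hconv, h, zero_mul])
  have hYt₂ne : Yt₂ ≠ 0 := by
    intro h
    exact mul_ne_zero hX₁ hXt₂ (by rw [← hconv, h, mul_zero])
  -- Key: Y₁ * Xt₂⋆ = X₁ * Yt₂⋆
  have key : Y₁ * creflect d₂ Xt₂ = X₁ * creflect d₂ Yt₂ := by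
    have h3 : Yt₂ * (Y₁ * creflect d₂ Xt₂) = Yt₂ * (X₁ * creflect d₂ Yt₂) := by
      calc Yt₂ * (Y₁ * creflect d₂ Xt₂) = (Y₁ * Yt₂) * creflect d₂ Xt₂ := by ring
        _ = (X₁ * Xt₂) * creflect d₂ Xt₂ := by rw [hconv]
        _ = X₁ * (Xt₂ * creflect d₂ Xt₂) := by ring
        _ = X₁ * (Yt₂ * creflect d₂ Yt₂) := by rw [ha₂]
        _ = Yt₂ * (X₁ * creflect d₂ Yt₂) := by ring
    exact mul_left_cancel₀ hYt₂ne h3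
  -- X₁ divides Y₁
  have hdvd : X₁ ∣ Y₁ := hcop.dvd_of_dvd_mul_right ⟨creflect d₂ Yt₂, key⟩
  obtain ⟨q, hq⟩ := hdvd
  have hqdeg : q.natDegree = 0 := by
    have hq0 : q ≠ 0 := by
      intro h; exact hY₁ne (by rw [hq, h, mul_zero])
    have : X₁.natDegree + q.natDegree ≤ d₁ := by
      rw [← Polynomial.natDegree_mul hX₁ hq0, ← hq]; exact hY₁
    omega
  obtain ⟨c, hc⟩ := Polynomial.natDegree_eq_zero.mp hqdeg
  have hc0 : c ≠ 0 := by
    intro h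
    exact hY₁ne (by rw [hq, ← hc, h, map_zero, mul_zero])
  have hY₁eq : Y₁ = Polynomial.C c * X₁ := by rw [hq, ← hc, mul_comm]
  -- |c| = 1 from autocorrelation of the first signal
  have hnorm : c * (starRingEnd ℂ) c = 1 := by
    have h4 : Polynomial.C (c * (starRingEnd ℂ) c) * (X₁ * creflect d₁ X₁) =
        1 * (X₁ * creflect d₁ X₁) := by
      rw [one_mul]
      conv_rhs => rw [← ha₁]
      rw [hY₁eq, creflect_C_mul_s8, Polynomial.C_mul]; ring
    have := mul_right_cancel₀ (mul_ne_zero hX₁ hX₁s) h4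
    have := Polynomial.C_injective this
    simpa using this
  have habs : ‖c‖ = 1 := by
    have : ‖c‖ * ‖c‖ = 1 := by
      have := congrArg (‖·‖) hnorm
      simpa [norm_mul, Complex.norm_conj] using this
    nlinarith [norm_nonneg c]
  refine ⟨c, habs, by simpa [Polynomial.smul_eq_C_mul] using hY₁eq, ?_⟩
  -- Yt₂ = conj c • Xt₂
  have h5 : Polynomial.C c * (Xt₂) = Polynomial.C c * (Polynomial.C c * Yt₂) := by
    have h6 : X₁ * (Polynomial.C c * Yt₂) = X₁ * Xt₂ := by
      rw [← hconv, hY₁eq]; ring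
    have := mul_left_cancel₀ hX₁ h6
    rw [this]
  have h7 : Xt₂ = Polynomial.C c * Yt₂ := mul_left_cancel₀ (by simpa using hc0) h5
  rw [Polynomial.smul_eq_C_mul, h7]
  rw [← mul_assoc, ← Polynomial.C_mul, mul_comm ((starRingEnd ℂ) c) c, hnorm]
  simp
end
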